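/- Let μ be an absolutely continuous probability measure on ℝⁿ with finite second moment, let R > 0 and 0 < ρ ≤ 1, and define S_{R,ρ}(x) = x for x ∈ B(0,R) and S_{R,ρ}(x) = R·x/‖x‖ + min{‖x‖ − R, ρ}·x/(1 + ‖x‖) for x ∉ B(0,R). Then the pushforward μ̃ = (S_{R,ρ})♯μ is absolutely continuous with respect to Lebesgue measure, is supported in the closed ball of radius R + ρ, and satisfies W₁(μ, μ̃) ≤ 3∫_{ℝⁿ∖B(0,R)} ‖x‖ dμ(x). -/

import Mathlib

/-!
Statement 19 (Truncation map: pushforward is compactly supported, absolutely continuous,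
and `W₁`-close to `μ`).
-/

open MeasureTheory ENNReal Classical

noncomputable section

abbrev Euc (n : ℕ) := EuclideanSpace ℝ (Fin n)

def IsCoupling {n : ℕ} (μ ν : Measure (Euc n)) (π : Measure (Euc n × Euc n)) : Prop :=
  π.map Prod.fst = μ ∧ π.map Prod.snd = ν

/-- Wasserstein-1 distance. -/
noncomputable def W1 {n : ℕ} (μ ν : Measure (Euc n)) : ℝ :=
  (⨅ π ∈ {π | IsCoupling μ ν π}, ∫⁻ p, (‖p.1 - p.2‖₊ : ℝ≥0∞) ∂π).toReal

def FiniteSecondMoment {n : ℕ} (μ : Measure (Euc n)) : Prop :=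
  ∫⁻ x, (‖x‖₊ : ℝ≥0∞) ^ 2 ∂μ < ⊤

lemma hasFDerivAt_norm' {n : ℕ} (x : Euc n) (hx : x ≠ 0) :
    HasFDerivAt (fun y : Euc n => ‖y‖) (‖x‖⁻¹ • innerSL ℝ x) x := by
  have hnx : ‖x‖ ≠ 0 := norm_ne_zero_iff.mpr hx
  have h1 : HasFDerivAt (fun y : Euc n => ‖y‖ ^ 2) ((2:ℕ) • innerSL ℝ x) x :=
    (hasStrictFDerivAt_norm_sq x).hasFDerivAt
  have h2 : HasDerivAt Real.sqrt (1 / (2 * Real.sqrt (‖x‖ ^ 2))) (‖x‖ ^ 2) :=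
    Real.hasDerivAt_sqrt (by positivity)
  have h3 := h2.comp_hasFDerivAt x h1
  have heq : (fun y : Euc n => Real.sqrt (‖y‖ ^ 2)) = fun y : Euc n => ‖y‖ := by
    funext y; rw [Real.sqrt_sq (norm_nonneg y)]
  rw [show (Real.sqrt ∘ fun y : Euc n => ‖y‖ ^ 2) = fun y : Euc n => ‖y‖ from heq] at h3
  refine h3.congr_fderiv ?_
  rw [Real.sqrt_sq (norm_nonneg x)]
  ext v
  simp [ContinuousLinearMap.smul_apply, smul_smul]
  ring

lemma hasFDerivAt_radial {n : ℕ} (φ : ℝ → ℝ) (dφ : ℝ) (x : Euc n) (hx : x ≠ 0)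
    (hφ : HasDerivAt φ dφ ‖x‖) :
    HasFDerivAt (fun y : Euc n => φ ‖y‖ • y)
      (φ ‖x‖ • ContinuousLinearMap.id ℝ (Euc n)
        + ((dφ * ‖x‖⁻¹) • innerSL ℝ x).smulRight x) x := by
  have h1 : HasFDerivAt (fun y : Euc n => φ ‖y‖) (dφ • (‖x‖⁻¹ • innerSL ℝ x)) x :=
    hφ.comp_hasFDerivAt x (hasFDerivAt_norm' x hx)
  have h2 := h1.smul (hasFDerivAt_id x)
  refine (h2.congr_fderiv ?_).congr_of_eventuallyEq (Filter.Eventually.of_forall fun y => ?_) <;> simp [smul_smul]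

lemma det_ne_zero_radial {n : ℕ} (a b : ℝ) (x : Euc n) (ha : a ≠ 0)
    (hab : a + b * ‖x‖ ^ 2 ≠ 0) :
    (a • ContinuousLinearMap.id ℝ (Euc n) + (b • innerSL ℝ x).smulRight x).det ≠ 0 := by
  set A := a • ContinuousLinearMap.id ℝ (Euc n) + (b • innerSL ℝ x).smulRight x with hA
  intro hdet
  have hker := LinearMap.bot_lt_ker_of_det_eq_zero (f := (A : Euc n →ₗ[ℝ] Euc n)) hdet
  obtain ⟨v, hv, hv0⟩ := SetLike.exists_of_lt hker
  simp only [LinearMap.mem_ker] at hv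
  have hv' : A v = 0 := hv
  have hAv : A v = a • v + (b * inner ℝ x v) • x := by
    simp [hA, ContinuousLinearMap.smulRight_apply, real_inner_smul_left]
  rw [hAv] at hv'
  have hinner : inner ℝ x (a • v + (b * inner ℝ x v) • x) = (0 : ℝ) := by rw [hv']; simp
  rw [inner_add_right, real_inner_smul_right, real_inner_smul_right,
    real_inner_self_eq_norm_sq] at hinner
  have h2 : (inner ℝ x v : ℝ) * (a + b * ‖x‖ ^ 2) = 0 := by ring_nf; ring_nf at hinner; linarith
  have h3 : (inner ℝ x v : ℝ) = 0 := by
    rcases mul_eq_zero.mp h2 with h | h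
    · exact h
    · exact absurd h hab
  rw [h3] at hv'
  simp at hv'
  rcases hv' with h | h
  · exact ha h
  · exact hv0 (by simp [h])

lemma null_preimage_on {n : ℕ} (S : Euc n → Euc n) (hSmeas : Measurable S)
    (s : Set (Euc n)) (hs : MeasurableSet s)
    (A : Euc n → Euc n →L[ℝ] Euc n)
    (hderiv : ∀ x ∈ s, HasFDerivWithinAt S (A x) s x)
    (hinj : Set.InjOn S s)
    (hdet : ∀ x ∈ s, (A x).det ≠ 0)
    (hAmeas : AEMeasurable (fun x => (A x).det) (volume.restrict s))
    {N : Set (Euc n)} (hN : MeasurableSet N) (hNnull : volume N = 0) :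
    volume (S ⁻¹' N ∩ s) = 0 := by
  have key := lintegral_image_eq_lintegral_abs_det_fderiv_mul volume hs hderiv hinj
      (N.indicator (1 : Euc n → ℝ≥0∞))
  have h0 : ∫⁻ x in s, ENNReal.ofReal |(A x).det| * N.indicator 1 (S x) ∂volume = 0 := by
    rw [← key]
    refine le_antisymm ?_ bot_le
    calc ∫⁻ x in S '' s, N.indicator 1 x ∂volume
        ≤ ∫⁻ x, N.indicator (1 : Euc n → ℝ≥0∞) x ∂volume := setLIntegral_le_lintegral _ _
      _ = volume N := by rw [lintegral_indicator hN]; simp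
      _ = 0 := hNnull
  have hmeas : AEMeasurable (fun x => ENNReal.ofReal |(A x).det| * N.indicator 1 (S x))
      (volume.restrict s) :=
    ((measurable_abs.comp_aemeasurable hAmeas).ennreal_ofReal).mul
      (((measurable_one.indicator hN).comp hSmeas).aemeasurable)
  have hae : ∀ᵐ x ∂(volume.restrict s),
      ENNReal.ofReal |(A x).det| * N.indicator 1 (S x) = 0 :=
    (lintegral_eq_zero_iff' hmeas).1 h0
  have hae2 : ∀ᵐ x ∂(volume.restrict s), x ∉ S ⁻¹' N := by
    filter_upwards [hae, ae_restrict_mem hs] with x h hx hmem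
    have h1 : N.indicator (1 : Euc n → ℝ≥0∞) (S x) = 1 := by
      exact Set.indicator_of_mem hmem (1 : Euc n → ℝ≥0∞)
    rw [h1, mul_one, ENNReal.ofReal_eq_zero] at h
    have := hdet x hx
    have habs : 0 < |(A x).det| := abs_pos.mpr this
    linarith
  have : (volume.restrict s) (S ⁻¹' N) = 0 := measure_eq_zero_iff_ae_notMem.mpr hae2
  rw [Measure.restrict_apply (hN.preimage hSmeas)] at this
  exact this

section RealFacts
variable {R ρ : ℝ}

lemma cF_eq (hR : 0 < R) {r : ℝ} (hr : R ≤ r) :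
    (R / r + min (r - R) ρ / (1 + r)) * r = R + min (r - R) ρ * (r / (1 + r)) := by
  have hr0 : 0 < r := lt_of_lt_of_le hR hr
  have h1r : 0 < 1 + r := by linarith
  field_simp

lemma m_nonneg (hρ : 0 < ρ) {r : ℝ} (hr : R ≤ r) : 0 ≤ min (r - R) ρ :=
  le_min (by linarith) hρ.le

lemma frac_nonneg {r : ℝ} (hr : 0 ≤ r) : 0 ≤ r / (1 + r) :=
  div_nonneg hr (by linarith)

lemma frac_le_one {r : ℝ} (hr : 0 ≤ r) : r / (1 + r) ≤ 1 := by
  rw [div_le_one (by linarith)]; linarith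

lemma cF_le (hR : 0 < R) (hρ : 0 < ρ) {r : ℝ} (hr : R ≤ r) :
    (R / r + min (r - R) ρ / (1 + r)) * r ≤ R + ρ ∧
    (R / r + min (r - R) ρ / (1 + r)) * r ≤ r := by
  have hr0 : 0 < r := lt_of_lt_of_le hR hr
  have hm := m_nonneg (R := R) hρ hr
  have h1 : min (r - R) ρ * (r / (1 + r)) ≤ min (r - R) ρ * 1 :=
    mul_le_mul_of_nonneg_left (frac_le_one hr0.le) hm
  rw [mul_one] at h1
  rw [cF_eq hR hr]
  constructor
  · have : min (r - R) ρ ≤ ρ := min_le_right _ _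
    linarith
  · have : min (r - R) ρ ≤ r - R := min_le_left _ _
    linarith

lemma c_nonneg (hR : 0 < R) (hρ : 0 < ρ) {r : ℝ} (hr : R ≤ r) :
    0 ≤ R / r + min (r - R) ρ / (1 + r) := by
  have hr0 : 0 < r := lt_of_lt_of_le hR hr
  have := m_nonneg (R := R) hρ hr
  positivity

lemma c_pos (hR : 0 < R) (hρ : 0 < ρ) {r : ℝ} (hr : R ≤ r) :
    0 < R / r + min (r - R) ρ / (1 + r) := by
  have hr0 : 0 < r := lt_of_lt_of_le hR hr
  have h1 : 0 < R / r := div_pos hR hr0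
  have h2 : 0 ≤ min (r - R) ρ / (1 + r) := div_nonneg (m_nonneg hρ hr) (by linarith)
  linarith

lemma F_strictMono (hR : 0 < R) (hρ : 0 < ρ) :
    StrictMonoOn (fun r => R + min (r - R) ρ * (r / (1 + r))) (Set.Ici R) := by
  intro r hr s hs hrs
  simp only [Set.mem_Ici] at hr hs
  have hr0 : 0 < r := lt_of_lt_of_le hR hr
  have hs0 : 0 < s := hr0.trans hrs
  have hfrac : r / (1 + r) < s / (1 + s) := by
    rw [div_lt_div_iff₀ (by linarith) (by linarith)]
    nlinarith
  have hfr : 0 ≤ r / (1 + r) := frac_nonneg hr0.le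
  have hfs : 0 < s / (1 + s) := div_pos hs0 (by linarith)
  have hmr : 0 ≤ min (r - R) ρ := m_nonneg hρ hr
  have hmono : min (r - R) ρ ≤ min (s - R) ρ :=
    min_le_min (by linarith) le_rfl
  simp only
  rcases eq_or_lt_of_le hmr with h0 | h0
  · have hms : 0 < min (s - R) ρ := lt_min (by nlinarith [min_le_left (r - R) ρ, min_le_right (r - R) ρ]; ) hρ
    nlinarith
  · nlinarith

end RealFacts

lemma S_injOn {n : ℕ} {R ρ : ℝ} (hR : 0 < R) (hρ : 0 < ρ) (S : Euc n → Euc n)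
    (hSout : ∀ x : Euc n, R ≤ ‖x‖ →
      S x = (R / ‖x‖ + min (‖x‖ - R) ρ / (1 + ‖x‖)) • x) :
    Set.InjOn S {x : Euc n | R ≤ ‖x‖} := by
  have hnorm : ∀ x : Euc n, R ≤ ‖x‖ →
      ‖S x‖ = R + min (‖x‖ - R) ρ * (‖x‖ / (1 + ‖x‖)) := by
    intro x hx
    rw [hSout x hx, norm_smul, Real.norm_eq_abs, abs_of_nonneg (c_nonneg hR hρ hx),
      cF_eq hR hx]
  intro x hx y hy hxy
  simp only [Set.mem_setOf_eq] at hx hy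
  have h1 : ‖x‖ = ‖y‖ := by
    refine (F_strictMono (R := R) (ρ := ρ) hR hρ).injOn hx hy ?_
    show R + min (‖x‖ - R) ρ * (‖x‖ / (1 + ‖x‖)) = R + min (‖y‖ - R) ρ * (‖y‖ / (1 + ‖y‖))
    rw [← hnorm x hx, ← hnorm y hy, hxy]
  have hc : (0 : ℝ) < R / ‖x‖ + min (‖x‖ - R) ρ / (1 + ‖x‖) := c_pos hR hρ hx
  rw [hSout x hx, hSout y hy, ← h1] at hxy
  exact smul_right_injective (Euc n) hc.ne' hxy

lemma hasDerivAt_phi1 {R : ℝ} {r : ℝ} (hr : 0 < r) :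
    HasDerivAt (fun t => R / t + (t - R) / (1 + t))
      (-R / r ^ 2 + (1 + R) / (1 + r) ^ 2) r := by
  have h1 : HasDerivAt (fun t : ℝ => R / t) ((0 * r - R * 1) / r ^ 2) r :=
    (hasDerivAt_const r R).div (hasDerivAt_id r) hr.ne'
  have h2 : HasDerivAt (fun t : ℝ => (t - R) / (1 + t))
      ((1 * (1 + r) - (r - R) * 1) / (1 + r) ^ 2) r :=
    ((hasDerivAt_id r).sub_const R).div ((hasDerivAt_id r).const_add 1) (by positivity)
  refine (h1.add h2).congr_deriv ?_
  have h1r : (1 : ℝ) + r ≠ 0 := by positivity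
  field_simp
  ring

lemma hasDerivAt_phi2 {R ρ : ℝ} {r : ℝ} (hr : 0 < r) :
    HasDerivAt (fun t => R / t + ρ / (1 + t))
      (-R / r ^ 2 + -ρ / (1 + r) ^ 2) r := by
  have h1 : HasDerivAt (fun t : ℝ => R / t) ((0 * r - R * 1) / r ^ 2) r :=
    (hasDerivAt_const r R).div (hasDerivAt_id r) hr.ne'
  have h2 : HasDerivAt (fun t : ℝ => ρ / (1 + t))
      ((0 * (1 + r) - ρ * 1) / (1 + r) ^ 2) r :=
    (hasDerivAt_const r ρ).div ((hasDerivAt_id r).const_add 1) (by positivity)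
  refine (h1.add h2).congr_deriv ?_
  have h1r : (1 : ℝ) + r ≠ 0 := by positivity
  field_simp
  ring

lemma smul_smulRight' {n : ℕ} (c : ℝ) (L : Euc n →L[ℝ] ℝ) (x : Euc n) :
    (c • L).smulRight x = c • L.smulRight x := by
  ext v
  simp [smul_smul]

lemma contOn_A {n : ℕ} (φ dφ : ℝ → ℝ) (s : Set (Euc n)) (hs0 : ∀ x ∈ s, x ≠ 0)
    (hφ : ContinuousOn (fun x : Euc n => φ ‖x‖) s)
    (hdφ : ContinuousOn (fun x : Euc n => dφ ‖x‖) s) :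
    ContinuousOn (fun x : Euc n => φ ‖x‖ • ContinuousLinearMap.id ℝ (Euc n)
      + ((dφ ‖x‖ * ‖x‖⁻¹) • innerSL ℝ x).smulRight x) s := by
  have cont1 : Continuous fun x : Euc n => (innerSL ℝ x).smulRight x := by
    exact (isBoundedBilinearMap_smulRight (𝕜 := ℝ)).continuous.comp
      ((innerSL ℝ).continuous.prodMk continuous_id)
  have heq : ∀ x : Euc n, ((dφ ‖x‖ * ‖x‖⁻¹) • innerSL ℝ x).smulRight x
      = (dφ ‖x‖ * ‖x‖⁻¹) • (innerSL ℝ x).smulRight x := fun x => smul_smulRight' _ _ _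
  have hinv : ContinuousOn (fun x : Euc n => ‖x‖⁻¹) s :=
    continuous_norm.continuousOn.inv₀ (fun x hx => norm_ne_zero_iff.mpr (hs0 x hx))
  refine ContinuousOn.add (hφ.smul continuousOn_const) ?_
  refine ContinuousOn.congr ((ContinuousOn.mul hdφ hinv).smul cont1.continuousOn) ?_
  intro x hx
  exact heq x

set_option maxHeartbeats 2000000 in
theorem truncation_map_pushforward
    {n : ℕ} (μ : Measure (Euc n))
    (hprob : IsProbabilityMeasure μ) (hac : μ ≪ volume) (hmom : FiniteSecondMoment μ)
    (R ρ : ℝ) (hR : 0 < R) (hρpos : 0 < ρ) (hρle : ρ ≤ 1)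
    (S : Euc n → Euc n)
    (hS : ∀ x : Euc n, S x =
      if x ∈ Metric.ball (0 : Euc n) R then x
      else (R / ‖x‖) • x + (min (‖x‖ - R) ρ / (1 + ‖x‖)) • x) :
    Measure.map S μ ≪ volume ∧
    (Measure.map S μ) (Metric.closedBall (0 : Euc n) (R + ρ))ᶜ = 0 ∧
    W1 μ (Measure.map S μ) ≤ 3 * ∫ x in (Metric.ball (0 : Euc n) R)ᶜ, ‖x‖ ∂μ := by
  have hSin : ∀ x : Euc n, ‖x‖ < R → S x = x := by
    intro x hx; rw [hS, if_pos (mem_ball_zero_iff.mpr hx)]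
  have hSout : ∀ x : Euc n, R ≤ ‖x‖ →
      S x = (R / ‖x‖ + min (‖x‖ - R) ρ / (1 + ‖x‖)) • x := by
    intro x hx
    rw [hS, if_neg (fun h => absurd (mem_ball_zero_iff.mp h) (not_lt.mpr hx)), add_smul]
  have hSmeas : Measurable S := by
    have hfe : S = fun x => if ‖x‖ < R then x
        else (R / ‖x‖ + min (‖x‖ - R) ρ / (1 + ‖x‖)) • x := by
      funext x
      by_cases h : ‖x‖ < R
      · rw [hSin x h, if_pos h]
      · rw [hSout x (not_lt.mp h), if_neg h]
    rw [hfe]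
    refine Measurable.ite (measurableSet_lt measurable_norm measurable_const) measurable_id ?_
    exact ((measurable_const.div measurable_norm).add
      (((measurable_norm.sub measurable_const).min measurable_const).div
        (measurable_const.add measurable_norm))).smul measurable_id
  have hnormS : ∀ x : Euc n, ‖S x‖ ≤ R + ρ := by
    intro x
    by_cases h : ‖x‖ < R
    · rw [hSin x h]; linarith
    · have hx : R ≤ ‖x‖ := not_lt.mp h
      rw [hSout x hx, norm_smul, Real.norm_eq_abs, abs_of_nonneg (c_nonneg hR hρpos hx)]
      exact (cF_le hR hρpos hx).1
  have part2 : (Measure.map S μ) (Metric.closedBall (0 : Euc n) (R + ρ))ᶜ = 0 := by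
    rw [Measure.map_apply hSmeas measurableSet_closedBall.compl]
    have : S ⁻¹' (Metric.closedBall (0 : Euc n) (R + ρ))ᶜ = ∅ := by
      rw [Set.eq_empty_iff_forall_notMem]
      intro x hx
      exact hx (mem_closedBall_zero_iff.mpr (hnormS x))
    rw [this, measure_empty]
  refine ⟨?_, part2, ?_⟩
  · -- absolute continuity
    set φ1 : ℝ → ℝ := fun t => R / t + (t - R) / (1 + t) with hφ1
    set dφ1 : ℝ → ℝ := fun t => -R / t ^ 2 + (1 + R) / (1 + t) ^ 2 with hdφ1
    set φ2 : ℝ → ℝ := fun t => R / t + ρ / (1 + t) with hφ2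
    set dφ2 : ℝ → ℝ := fun t => -R / t ^ 2 + -ρ / (1 + t) ^ 2 with hdφ2
    set s1 : Set (Euc n) := {x | R < ‖x‖} ∩ {x | ‖x‖ < R + ρ} with hs1
    set s2 : Set (Euc n) := {x | R + ρ < ‖x‖} with hs2
    have hs1meas : MeasurableSet s1 :=
      (measurableSet_lt measurable_const measurable_norm).inter
        (measurableSet_lt measurable_norm measurable_const)
    have hs2meas : MeasurableSet s2 := measurableSet_lt measurable_const measurable_norm
    set A1 : Euc n → Euc n →L[ℝ] Euc n := fun x => φ1 ‖x‖ • ContinuousLinearMap.id ℝ (Euc n)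
      + ((dφ1 ‖x‖ * ‖x‖⁻¹) • innerSL ℝ x).smulRight x with hA1
    set A2 : Euc n → Euc n →L[ℝ] Euc n := fun x => φ2 ‖x‖ • ContinuousLinearMap.id ℝ (Euc n)
      + ((dφ2 ‖x‖ * ‖x‖⁻¹) • innerSL ℝ x).smulRight x with hA2
    have hSs1 : ∀ y ∈ s1, S y = φ1 ‖y‖ • y := by
      intro y hy
      obtain ⟨h1, h2⟩ := hy
      simp only [Set.mem_setOf_eq] at h1 h2
      rw [hSout y h1.le]
      congr 2
      rw [min_eq_left (by linarith : ‖y‖ - R ≤ ρ)]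
    have hSs2 : ∀ y ∈ s2, S y = φ2 ‖y‖ • y := by
      intro y hy
      have h1 : R + ρ < ‖y‖ := hy
      rw [hSout y (by linarith)]
      congr 2
      rw [min_eq_right (by linarith : ρ ≤ ‖y‖ - R)]
    have hne0_1 : ∀ x ∈ s1, x ≠ 0 := by
      intro x hx h0
      obtain ⟨h1, _⟩ := hx
      simp only [Set.mem_setOf_eq] at h1
      rw [h0, norm_zero] at h1
      linarith
    have hne0_2 : ∀ x ∈ s2, x ≠ 0 := by
      intro x hx h0
      have h1 : R + ρ < ‖x‖ := hx
      rw [h0, norm_zero] at h1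
      linarith
    have hd1 : ∀ x ∈ s1, HasFDerivWithinAt S (A1 x) s1 x := by
      intro x hx
      have hr : 0 < ‖x‖ := by
        obtain ⟨h1, _⟩ := hx
        simp only [Set.mem_setOf_eq] at h1
        linarith
      have hder := hasFDerivAt_radial φ1 (dφ1 ‖x‖) x (hne0_1 x hx) (hasDerivAt_phi1 hr)
      exact hder.hasFDerivWithinAt.congr hSs1 (hSs1 x hx)
    have hd2 : ∀ x ∈ s2, HasFDerivWithinAt S (A2 x) s2 x := by
      intro x hx
      have h1 : R + ρ < ‖x‖ := hx
      have hr : 0 < ‖x‖ := by linarith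
      have hder := hasFDerivAt_radial φ2 (dφ2 ‖x‖) x (hne0_2 x hx) (hasDerivAt_phi2 hr)
      exact hder.hasFDerivWithinAt.congr hSs2 (hSs2 x hx)
    have hdet1 : ∀ x ∈ s1, (A1 x).det ≠ 0 := by
      intro x hx
      obtain ⟨h1, h2⟩ := hx
      simp only [Set.mem_setOf_eq] at h1 h2
      have hr : 0 < ‖x‖ := by linarith
      refine det_ne_zero_radial _ _ x ?_ ?_
      · have hpos : 0 < φ1 ‖x‖ := by
          have ha : 0 < R / ‖x‖ := div_pos hR hr
          have hb : 0 ≤ (‖x‖ - R) / (1 + ‖x‖) := div_nonneg (by linarith) (by linarith)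
          simp only [hφ1]
          linarith
        exact hpos.ne'
      · have key : φ1 ‖x‖ + dφ1 ‖x‖ * ‖x‖⁻¹ * ‖x‖ ^ 2
            = (‖x‖ ^ 2 + 2 * ‖x‖ - R) / (1 + ‖x‖) ^ 2 := by
          simp only [hφ1, hdφ1]
          field_simp
          ring
        rw [key]
        exact (div_pos (by nlinarith) (by positivity)).ne'
    have hdet2 : ∀ x ∈ s2, (A2 x).det ≠ 0 := by
      intro x hx
      have h1 : R + ρ < ‖x‖ := hx
      have hr : 0 < ‖x‖ := by linarith
      refine det_ne_zero_radial _ _ x ?_ ?_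
      · have hpos : 0 < φ2 ‖x‖ := by
          have ha : 0 < R / ‖x‖ := div_pos hR hr
          have hb : 0 ≤ ρ / (1 + ‖x‖) := div_nonneg hρpos.le (by linarith)
          simp only [hφ2]
          linarith
        exact hpos.ne'
      · have key : φ2 ‖x‖ + dφ2 ‖x‖ * ‖x‖⁻¹ * ‖x‖ ^ 2 = ρ / (1 + ‖x‖) ^ 2 := by
          simp only [hφ2, hdφ2]
          field_simp
          ring
        rw [key]
        exact (div_pos hρpos (by positivity)).ne'
    have hinjAll := S_injOn hR hρpos S hSout
    have hinj1 : Set.InjOn S s1 := hinjAll.mono (fun x hx => by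
      obtain ⟨h1, _⟩ := hx
      simp only [Set.mem_setOf_eq] at h1 ⊢
      linarith)
    have hinj2 : Set.InjOn S s2 := hinjAll.mono (fun x hx => by
      have h1 : R + ρ < ‖x‖ := hx
      simp only [Set.mem_setOf_eq]
      linarith)
    have hcφ1 : ContinuousOn (fun x : Euc n => φ1 ‖x‖) s1 := by
      simp only [hφ1]
      refine ContinuousOn.add
        (continuousOn_const.div continuous_norm.continuousOn
          (fun x hx => norm_ne_zero_iff.mpr (hne0_1 x hx)))
        ((continuous_norm.continuousOn.sub continuousOn_const).div
          (continuousOn_const.add continuous_norm.continuousOn)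
          (fun x _ => by positivity))
    have hcdφ1 : ContinuousOn (fun x : Euc n => dφ1 ‖x‖) s1 := by
      simp only [hdφ1]
      refine ContinuousOn.add
        (continuousOn_const.div (continuous_norm.continuousOn.pow 2)
          (fun x hx => pow_ne_zero 2 (norm_ne_zero_iff.mpr (hne0_1 x hx))))
        (continuousOn_const.div
          ((continuousOn_const.add continuous_norm.continuousOn).pow 2)
          (fun x _ => by positivity))
    have hcφ2 : ContinuousOn (fun x : Euc n => φ2 ‖x‖) s2 := by
      simp only [hφ2]
      refine ContinuousOn.add
        (continuousOn_const.div continuous_norm.continuousOn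
          (fun x hx => norm_ne_zero_iff.mpr (hne0_2 x hx)))
        (continuousOn_const.div
          (continuousOn_const.add continuous_norm.continuousOn)
          (fun x _ => by positivity))
    have hcdφ2 : ContinuousOn (fun x : Euc n => dφ2 ‖x‖) s2 := by
      simp only [hdφ2]
      refine ContinuousOn.add
        (continuousOn_const.div (continuous_norm.continuousOn.pow 2)
          (fun x hx => pow_ne_zero 2 (norm_ne_zero_iff.mpr (hne0_2 x hx))))
        (continuousOn_const.div
          ((continuousOn_const.add continuous_norm.continuousOn).pow 2)
          (fun x _ => by positivity))
    have hcontA1 : ContinuousOn A1 s1 := contOn_A φ1 dφ1 s1 hne0_1 hcφ1 hcdφ1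
    have hcontA2 : ContinuousOn A2 s2 := contOn_A φ2 dφ2 s2 hne0_2 hcφ2 hcdφ2
    have hmdet1 : AEMeasurable (fun x => (A1 x).det) (volume.restrict s1) :=
      (ContinuousLinearMap.continuous_det.comp_continuousOn hcontA1).aemeasurable hs1meas
    have hmdet2 : AEMeasurable (fun x => (A2 x).det) (volume.restrict s2) :=
      (ContinuousLinearMap.continuous_det.comp_continuousOn hcontA2).aemeasurable hs2meas
    refine Measure.AbsolutelyContinuous.mk (fun N hN hNnull => ?_)
    rw [Measure.map_apply hSmeas hN]
    have hn1 : volume (S ⁻¹' N ∩ s1) = 0 :=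
      null_preimage_on S hSmeas s1 hs1meas A1 hd1 hinj1 hdet1 hmdet1 hN hNnull
    have hn2 : volume (S ⁻¹' N ∩ s2) = 0 :=
      null_preimage_on S hSmeas s2 hs2meas A2 hd2 hinj2 hdet2 hmdet2 hN hNnull
    have hcover : S ⁻¹' N ⊆ N ∪ Metric.sphere (0 : Euc n) R ∪ (S ⁻¹' N ∩ s1)
        ∪ Metric.sphere (0 : Euc n) (R + ρ) ∪ (S ⁻¹' N ∩ s2) := by
      intro x hx
      rcases lt_trichotomy ‖x‖ R with h | h | h
      · exact Or.inl (Or.inl (Or.inl (Or.inl (by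
          have : S x ∈ N := hx
          rwa [hSin x h] at this))))
      · exact Or.inl (Or.inl (Or.inl (Or.inr (mem_sphere_zero_iff_norm.mpr h))))
      · rcases lt_trichotomy ‖x‖ (R + ρ) with h2 | h2 | h2
        · exact Or.inl (Or.inl (Or.inr ⟨hx, ⟨h, h2⟩⟩))
        · exact Or.inl (Or.inr (mem_sphere_zero_iff_norm.mpr h2))
        · exact Or.inr ⟨hx, h2⟩
    refine measure_mono_null hcover ?_
    have hμN : μ N = 0 := hac hNnull
    have hsph1 : μ (Metric.sphere (0 : Euc n) R) = 0 :=
      hac (Measure.addHaar_sphere_of_ne_zero (volume : Measure (Euc n)) (0 : Euc n) hR.ne')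
    have hsph2 : μ (Metric.sphere (0 : Euc n) (R + ρ)) = 0 :=
      hac (Measure.addHaar_sphere_of_ne_zero (volume : Measure (Euc n)) (0 : Euc n) (by positivity : R + ρ ≠ 0))
    exact measure_union_null
      (measure_union_null
        (measure_union_null (measure_union_null hμN hsph1) (hac hn1)) hsph2) (hac hn2)
  · -- W1 bound
    set B := Metric.ball (0 : Euc n) R with hB
    set I := ∫⁻ x in Bᶜ, (‖x‖₊ : ℝ≥0∞) ∂μ with hI
    have hIbound : I ≤ (ENNReal.ofReal R)⁻¹ * ∫⁻ x, (‖x‖₊ : ℝ≥0∞) ^ 2 ∂μ := by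
      have hpt : ∀ x ∈ Bᶜ, (‖x‖₊ : ℝ≥0∞) ≤ (ENNReal.ofReal R)⁻¹ * (‖x‖₊ : ℝ≥0∞) ^ 2 := by
        intro x hx
        have hrx : R ≤ ‖x‖ := not_lt.mp (fun h => hx (mem_ball_zero_iff.mpr h))
        rw [← ENNReal.div_eq_inv_mul]
        rw [ENNReal.le_div_iff_mul_le (Or.inl (by simpa using hR)) (Or.inl ENNReal.ofReal_ne_top)]
        rw [pow_two]
        refine mul_le_mul_right ?_ _
        calc ENNReal.ofReal R ≤ ENNReal.ofReal ‖x‖ := ENNReal.ofReal_le_ofReal hrx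
          _ = (‖x‖₊ : ℝ≥0∞) := ofReal_norm x
      calc I ≤ ∫⁻ x in Bᶜ, (ENNReal.ofReal R)⁻¹ * (‖x‖₊ : ℝ≥0∞) ^ 2 ∂μ :=
            setLIntegral_mono' measurableSet_ball.compl hpt
        _ ≤ ∫⁻ x, (ENNReal.ofReal R)⁻¹ * (‖x‖₊ : ℝ≥0∞) ^ 2 ∂μ := setLIntegral_le_lintegral _ _
        _ = (ENNReal.ofReal R)⁻¹ * ∫⁻ x, (‖x‖₊ : ℝ≥0∞) ^ 2 ∂μ :=
            lintegral_const_mul' _ _ (by simpa using hR)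
    have hIfin : I ≠ ⊤ := by
      refine ne_top_of_le_ne_top ?_ hIbound
      exact (ENNReal.mul_lt_top (by simpa using hR) hmom).ne
    have hIb : ∫⁻ x, (‖x - S x‖₊ : ℝ≥0∞) ∂μ ≤ I := by
      rw [hI, ← lintegral_indicator measurableSet_ball.compl]
      refine lintegral_mono fun x => ?_
      by_cases h : ‖x‖ < R
      · rw [hSin x h]
        simp
      · have hx : R ≤ ‖x‖ := not_lt.mp h
        rw [Set.indicator_of_mem (by simpa [hB, mem_ball_zero_iff] using not_lt.mp h)]
        rw [ENNReal.coe_le_coe, ← NNReal.coe_le_coe, coe_nnnorm, coe_nnnorm]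
        set c := R / ‖x‖ + min (‖x‖ - R) ρ / (1 + ‖x‖) with hc
        have hc0 : 0 ≤ c := c_nonneg hR hρpos hx
        have hxpos : 0 < ‖x‖ := lt_of_lt_of_le hR hx
        have hc1 : c ≤ 1 := by
          have h2 := (cF_le hR hρpos hx).2
          rw [← hc] at h2
          nlinarith
        rw [hSout x hx, ← hc]
        have : x - c • x = (1 - c) • x := by
          rw [sub_smul, one_smul]
        rw [this, norm_smul, Real.norm_eq_abs, abs_of_nonneg (by linarith)]
        nlinarith
    set π₀ : Measure (Euc n × Euc n) := μ.map (fun x => (x, S x)) with hπ₀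
    have hgm : Measurable fun x : Euc n => (x, S x) := measurable_id.prodMk hSmeas
    have hcoup : IsCoupling μ (Measure.map S μ) π₀ := by
      constructor
      · rw [hπ₀, Measure.map_map measurable_fst hgm]
        simp [Function.comp_def]
      · rw [hπ₀, Measure.map_map measurable_snd hgm]
        rfl
    have hval : ∫⁻ p, (‖p.1 - p.2‖₊ : ℝ≥0∞) ∂π₀ = ∫⁻ x, (‖x - S x‖₊ : ℝ≥0∞) ∂μ := by
      rw [hπ₀, lintegral_map (f := fun p : Euc n × Euc n => (‖p.1 - p.2‖₊ : ℝ≥0∞)) ((measurable_fst.sub measurable_snd).nnnorm.coe_nnreal_ennreal) hgm]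
    have hinf : (⨅ π ∈ {π | IsCoupling μ (Measure.map S μ) π},
        ∫⁻ p, (‖p.1 - p.2‖₊ : ℝ≥0∞) ∂π) ≤ I := by
      refine le_trans (iInf₂_le π₀ hcoup) ?_
      rw [hval]
      exact hIb
    have hW : W1 μ (Measure.map S μ) ≤ I.toReal := by
      exact ENNReal.toReal_mono hIfin hinf
    have hInt : ∫ x in Bᶜ, ‖x‖ ∂μ = I.toReal := by
      rw [integral_eq_lintegral_of_nonneg_ae
        (Filter.Eventually.of_forall fun x => norm_nonneg x)
        continuous_norm.aestronglyMeasurable]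
      congr 1
      refine lintegral_congr fun x => ?_
      exact ofReal_norm x
    have h0 : 0 ≤ ∫ x in Bᶜ, ‖x‖ ∂μ := integral_nonneg fun x => norm_nonneg x
    rw [hB] at hInt h0 ⊢
    linarith
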